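/- arXiv:2010.09562 — 3 statements merged into one kernel-verified Lean document; each statement's English description precedes it below -/
import Mathlib

section
/- Let k be a field, E ⊆ B commutative k-algebras, and R a commutative k-algebra. Write B ⊗_k R and E ⊗_k R for the scalar extensions. Suppose γ ∈ B ⊗_k R and D is a set of k-algebra homomorphisms δ : R → k such that (1) for every δ ∈ D, the induced map id_B ⊗ δ : B ⊗_k R → B sends γ into E, and (2) the only element s ∈ R with δ(s) = 0 for all δ ∈ D is s = 0. Then γ lies in the image of E ⊗_k R → B ⊗_k R. -/
open TensorProduct

/-! Pass to the quotient `B ⧸ E`: the image `τ` of `γ` in `(B ⧸ E) ⊗ R` is killed by every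
contraction `id ⊗ δ` with `δ ∈ D`. Writing `τ` in a `k`-basis of `B ⧸ E`, its coordinates are
elements of `R` on which every `δ ∈ D` vanishes, so `τ = 0`. Since `R` is flat over `k`,
`E ⊗ R → B ⊗ R → (B ⧸ E) ⊗ R` is exact, hence `γ` comes from `E ⊗ R`. -/

namespace TensorProduct

variable {k M N : Type*} [CommRing k] [AddCommGroup M] [Module k M] [AddCommGroup N] [Module k N]

def contractRight (φ : N →ₗ[k] k) : M ⊗[k] N →ₗ[k] M :=
  (TensorProduct.rid k M).toLinearMap ∘ₗ φ.lTensor M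

@[simp]
theorem contractRight_tmul (φ : N →ₗ[k] k) (m : M) (n : N) :
    contractRight φ (m ⊗ₜ[k] n) = φ n • m := by
  simp [contractRight]

theorem contractRight_rTensor {M' : Type*} [AddCommGroup M'] [Module k M']
    (φ : N →ₗ[k] k) (f : M →ₗ[k] M') (x : M ⊗[k] N) :
    contractRight φ (f.rTensor N x) = f (contractRight φ x) := by
  induction x using TensorProduct.induction_on with
  | zero => simp
  | tmul m n => simp
  | add x y hx hy => simp only [map_add, hx, hy]

theorem eq_zero_of_forall_contractRight_eq_zero [Module.Free k M] {ι : Type*}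
    (φ : ι → N →ₗ[k] k) (hφ : ∀ n, (∀ i, φ i n = 0) → n = 0)
    (x : M ⊗[k] N) (hx : ∀ i, contractRight (φ i) x = 0) : x = 0 := by
  let b := Module.Free.chooseBasis k M
  let e : M ⊗[k] N ≃ₗ[k] (Module.Free.ChooseBasisIndex k M →₀ N) :=
    TensorProduct.congr b.repr (LinearEquiv.refl k N) ≪≫ₗ TensorProduct.finsuppScalarLeft k N _
  have coord : ∀ ψ : N →ₗ[k] k, ∀ y j, ψ (e y j) = b.repr (contractRight ψ y) j := by
    intro ψ y j
    induction y using TensorProduct.induction_on with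
    | zero => simp
    | tmul m n => simp [e, mul_comm]
    | add y z hy hz => simp only [map_add, Finsupp.add_apply, hy, hz]
  rw [← e.map_eq_zero_iff]
  ext j
  exact hφ _ fun i => by simp [coord, hx]

theorem mem_range_rTensor_subtype_of_forall_contractRight_mem (P : Submodule k M)
    [Module.Free k (M ⧸ P)] [Module.Flat k N] {ι : Type*}
    (φ : ι → N →ₗ[k] k) (hφ : ∀ n, (∀ i, φ i n = 0) → n = 0)
    (x : M ⊗[k] N) (hx : ∀ i, contractRight (φ i) x ∈ P) :
    x ∈ LinearMap.range (P.subtype.rTensor N) := by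
  have hquot : P.mkQ.rTensor N x = 0 :=
    eq_zero_of_forall_contractRight_eq_zero φ hφ _ fun i => by
      rw [contractRight_rTensor, Submodule.mkQ_apply, Submodule.Quotient.mk_eq_zero]
      exact hx i
  exact (Module.Flat.rTensor_exact N (LinearMap.exact_subtype_mkQ P) x).mp hquot

end TensorProduct

theorem Algebra.TensorProduct.productMap_id_ofId_comp_eq_contractRight
    {k B R : Type*} [CommRing k] [CommRing B] [CommRing R] [Algebra k B] [Algebra k R]
    (δ : R →ₐ[k] k) (x : B ⊗[k] R) :
    productMap (AlgHom.id k B) ((Algebra.ofId k B).comp δ) x =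
      TensorProduct.contractRight δ.toLinearMap x := by
  induction x using TensorProduct.induction_on with
  | zero => simp
  | tmul b r => simp [Algebra.ofId_apply, Algebra.smul_def, mul_comm]
  | add x y hx hy => simp only [map_add, hx, hy]

theorem stmt_1 (k : Type*) [Field k]
    (B R : Type*) [CommRing B] [CommRing R] [Algebra k B] [Algebra k R]
    (E : Subalgebra k B)
    (γ : B ⊗[k] R) (D : Set (R →ₐ[k] k))
    (h1 : ∀ δ ∈ D,
      (Algebra.TensorProduct.productMap (AlgHom.id k B)
        ((Algebra.ofId k B).comp δ)) γ ∈ E)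
    (h2 : ∀ s : R, (∀ δ ∈ D, δ s = 0) → s = 0) :
    γ ∈ (Algebra.TensorProduct.map E.val (AlgHom.id k R)).range := by
  obtain ⟨x, hx⟩ := TensorProduct.mem_range_rTensor_subtype_of_forall_contractRight_mem
    (Subalgebra.toSubmodule E) (fun δ : D => δ.1.toLinearMap)
    (fun s hs => h2 s fun δ hδ => hs ⟨δ, hδ⟩) γ fun δ => by
      rw [← Algebra.TensorProduct.productMap_id_ofId_comp_eq_contractRight]
      exact h1 δ δ.2
  exact ⟨x, hx⟩
end

section
/- Let G and H be topological groups, f : G → H a continuous closed group homomorphism with finite kernel, Γ ⊆ G a subgroup whose closure in G has empty interior, and Z ⊆ H a finite subset. Then the set Z · closure(f(Γ)) has empty interior in H, provided f is also an open map onto its closed image; in particular the closure of Z · f(Γ) has empty interior. -/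
/-!
Since `f` is closed, `closure (f '' Γ) ⊆ f '' closure Γ`, and the preimage of the latter is
`ker f * closure Γ`, a finite union of translates of a closed set with empty interior, so it has
empty interior. By continuity the open set `f ⁻¹' interior (f '' closure Γ)` lies in it and is
therefore empty; since `interior (f '' closure Γ)` lies in the range of `f`, it is empty too. Multiplying by the finite set `Z` keeps the set closed with empty interior, and
`closure (Z * f '' Γ) ⊆ Z * closure (f '' Γ)`.
-/

open Pointwise Set

theorem Set.Finite.interior_biUnion_eq_empty {X ι : Type*} [TopologicalSpace X] {I : Set ι}
    (hI : I.Finite) {s : ι → Set X} (hclosed : ∀ i ∈ I, IsClosed (s i))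
    (hint : ∀ i ∈ I, interior (s i) = ∅) : interior (⋃ i ∈ I, s i) = ∅ := by
  induction I, hI using Set.Finite.induction_on with
  | empty => simp
  | @insert i I _ hI ih =>
    rw [biUnion_insert, union_comm,
      interior_union_isClosed_of_interior_empty
        (hI.isClosed_biUnion fun j hj ↦ hclosed j (mem_insert_of_mem i hj))
        (hint i (mem_insert i I))]
    exact ih (fun j hj ↦ hclosed j (mem_insert_of_mem i hj))
      (fun j hj ↦ hint j (mem_insert_of_mem i hj))

theorem Continuous.interior_eq_empty_of_subset_range {X Y : Type*} [TopologicalSpace X]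
    [TopologicalSpace Y] {f : X → Y} (hf : Continuous f) {t : Set Y} (ht : t ⊆ range f)
    (h : interior (f ⁻¹' t) = ∅) : interior t = ∅ := by
  have hpre : f ⁻¹' interior t = ∅ :=
    subset_empty_iff.1 (h ▸ preimage_interior_subset_interior_preimage hf)
  rw [← subset_empty_iff, ← inter_eq_left.2 (interior_subset.trans ht),
    ← image_preimage_eq_inter_range, hpre, image_empty]

theorem Set.Finite.interior_mul_eq_empty {G : Type*} [Group G] [TopologicalSpace G]
    [ContinuousMul G] {Z s : Set G} (hZ : Z.Finite) (hs : IsClosed s)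
    (hint : interior s = ∅) : interior (Z * s) = ∅ := by
  rw [← iUnion_mul_left_image]
  refine hZ.interior_biUnion_eq_empty (fun a _ ↦ isClosedMap_mul_left a s hs) fun a _ ↦ ?_
  change interior (Homeomorph.mulLeft a '' s) = ∅
  rw [← (Homeomorph.mulLeft a).image_interior, hint, image_empty]

theorem MonoidHom.preimage_image_eq_ker_mul {G H : Type*} [Group G] [Group H] (f : G →* H)
    (s : Set G) : f ⁻¹' (f '' s) = (f.ker : Set G) * s := by
  ext x
  constructor
  · rintro ⟨y, hy, hfy⟩
    exact ⟨x * y⁻¹, by simp [MonoidHom.mem_ker, hfy], y, hy, by group⟩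
  · rintro ⟨k, hk, y, hy, rfl⟩
    exact ⟨y, hy, by simp [(MonoidHom.mem_ker).1 hk]⟩

theorem MonoidHom.interior_image_eq_empty_of_finite_ker {G H : Type*} [Group G]
    [TopologicalSpace G] [ContinuousMul G] [Group H] [TopologicalSpace H] (f : G →* H)
    (hf : Continuous f) (hker : (f.ker : Set G).Finite) {s : Set G} (hs : IsClosed s)
    (hint : interior s = ∅) : interior (f '' s) = ∅ :=
  hf.interior_eq_empty_of_subset_range (image_subset_range f s) <| by
    rw [f.preimage_image_eq_ker_mul]
    exact hker.interior_mul_eq_empty hs hint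

theorem stmt_7_general (G H : Type*) [Group G] [TopologicalSpace G] [IsTopologicalGroup G]
    [Group H] [TopologicalSpace H] [IsTopologicalGroup H]
    (f : G →* H) (hcont : Continuous f) (hclosed : IsClosedMap f)
    (hker : (f.ker : Set G).Finite)
    (Γ : Subgroup G) (hΓ : interior (closure (Γ : Set G)) = ∅)
    (Z : Set H) (hZ : Z.Finite) :
    interior (Z * closure (f '' (Γ : Set G))) = ∅ ∧
      interior (closure (Z * f '' (Γ : Set G))) = ∅ := by
  have himage : interior (closure (f '' (Γ : Set G))) = ∅ := by
    rw [hclosed.closure_image_eq_of_continuous hcont]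
    exact f.interior_image_eq_empty_of_finite_ker hcont hker isClosed_closure hΓ
  have hmul : interior (Z * closure (f '' (Γ : Set G))) = ∅ :=
    hZ.interior_mul_eq_empty isClosed_closure himage
  refine ⟨hmul, subset_empty_iff.1 (hmul ▸ interior_mono ?_)⟩
  exact closure_minimal (mul_subset_mul_left subset_closure)
    (isClosed_closure.mul_left_of_isCompact hZ.isCompact)

theorem stmt_7 (G H : Type*) [Group G] [TopologicalSpace G] [IsTopologicalGroup G]
    [Group H] [TopologicalSpace H] [IsTopologicalGroup H]
    [T2Space G] [T2Space H] [BaireSpace H]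
    (f : G →* H) (hcont : Continuous f) (hclosed : IsClosedMap f)
    (hker : (f.ker : Set G).Finite)
    (hrange : IsClosed (Set.range f))
    (hopen : ∀ U : Set G, IsOpen U → ∃ V : Set H, IsOpen V ∧ f '' U = V ∩ Set.range f)
    (Γ : Subgroup G) (hΓ : interior (closure (Γ : Set G)) = ∅)
    (Z : Set H) (hZ : Z.Finite) :
    interior (Z * closure (f '' (Γ : Set G))) = ∅ ∧
      interior (closure (Z * f '' (Γ : Set G))) = ∅ :=
  stmt_7_general G H f hcont hclosed hker Γ hΓ Z hZ
end

section
/- Let K and L be number fields with an isomorphism j between their finite adele rings 𝔸_L^f ≅ 𝔸_K^f as topological rings. Then [K : ℚ] = [L : ℚ]. -/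
/-!
Power-boundedness is defined purely in terms of the topological ring, so the homeomorphic ring
isomorphism `j` maps the power-bounded elements of `𝔸_L^f` onto those of `𝔸_K^f`. In a finite
adele ring these are exactly the integral adeles `Ô = ∏_v 𝒪_v`, so `j` restricts to a ring
isomorphism `Ô_L ≃ Ô_K` and hence induces `Ô_L / 2 Ô_L ≃ Ô_K / 2 Ô_K`. By density of `𝒪_K` in
each `𝒪_v` and the Chinese remainder theorem, `𝒪_K → Ô_K / 2 Ô_K` is surjective with kernel
`2 𝒪_K`, so `|Ô_K / 2 Ô_K| = |𝒪_K / 2 𝒪_K| = 2 ^ [K : ℚ]`.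
-/

open IsDedekindDomain IsDedekindDomain.HeightOneSpectrum Filter Topology

section PowerBounded

variable {A B : Type*} [Semiring A] [TopologicalSpace A] [Semiring B] [TopologicalSpace B]

def IsPowerBounded (x : A) : Prop :=
  ∀ U ∈ 𝓝 (0 : A), ∃ V ∈ 𝓝 (0 : A), ∀ n : ℕ, ∀ y ∈ V, x ^ n * y ∈ U

theorem IsPowerBounded.map {e : A ≃+* B} (he : Continuous e) (he' : Continuous e.symm) {x : A}
    (hx : IsPowerBounded x) : IsPowerBounded (e x) := by
  intro U hU
  obtain ⟨V, hV, hxV⟩ := hx (e ⁻¹' U) (he.tendsto' 0 0 (map_zero e) hU)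
  refine ⟨e.symm ⁻¹' V, he'.tendsto' 0 0 (map_zero e.symm) hV, fun n y hy => ?_⟩
  simpa using hxV n _ hy

theorem isPowerBounded_map_iff {e : A ≃+* B} (he : Continuous e) (he' : Continuous e.symm)
    {x : A} : IsPowerBounded (e x) ↔ IsPowerBounded x :=
  ⟨fun h => by simpa using h.map (e := e.symm) he' he, fun h => h.map he he'⟩

end PowerBounded

theorem le_one_of_forall_pow_mul_le_one₀ {G : Type*} [LinearOrderedCommGroupWithZero G]
    [MulArchimedean G] {a b : G} (hb : b ≠ 0) (h : ∀ n : ℕ, a ^ n * b ≤ 1) : a ≤ 1 := by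
  by_contra! ha
  obtain ⟨n, hn⟩ := exists_pow_lt₀ (inv_lt_one_of_one_lt₀ ha) (Units.mk0 b hb)
  rw [inv_pow, inv_lt_iff_one_lt_mul₀' (pow_pos (zero_lt_one.trans ha) n)] at hn
  exact (h n).not_gt hn

theorem Valued.isOpen_setOf_v_le {L Γ₀ : Type*} [Field L] [LinearOrderedCommGroupWithZero Γ₀]
    [Valued L Γ₀] {c : L} (hc : c ≠ 0) : IsOpen {x : L | Valued.v x ≤ Valued.v c} := by
  have hc' : 0 < Valued.v c := (Valuation.pos_iff _).mpr hc
  convert (Valued.isOpen_valuationSubring L).preimage (continuous_const_mul c⁻¹) using 1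
  ext x
  simp [Valuation.mem_valuationSubring_iff, inv_mul_le_one₀ hc']

namespace IsDedekindDomain.HeightOneSpectrum

variable {R : Type*} [CommRing R] [IsDedekindDomain R]

theorem exists_forall_intValuation_sub_le (S : Finset (HeightOneSpectrum R))
    (a : HeightOneSpectrum R → R) {r : R} (hr : r ≠ 0) :
    ∃ b : R, ∀ v ∈ S, v.intValuation (b - a v) ≤ v.intValuation r := by
  obtain ⟨b, hb⟩ := IsDedekindDomain.exists_forall_sub_mem_ideal (s := S) asIdeal
    (fun v => multiplicity v.asIdeal (Ideal.span {r})) (fun v _ => v.prime)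
    (fun v _ w _ hvw h => hvw (HeightOneSpectrum.ext h)) (fun v => a v)
  refine ⟨b, fun v hv => ?_⟩
  rw [v.intValuation_eq_exp_neg_multiplicity hr, intValuation_le_pow_iff_mem]
  exact hb v hv

theorem intValuation_prod_le (v : HeightOneSpectrum R) {ι : Type*} (s : Finset ι) (f : ι → R)
    {i : ι} (hi : i ∈ s) : v.intValuation (∏ j ∈ s, f j) ≤ v.intValuation (f i) := by
  classical
  rw [map_prod, ← Finset.mul_prod_erase _ _ hi]
  exact mul_le_of_le_one_right' (Finset.prod_le_one' fun j _ => v.intValuation_le_one _)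

theorem mem_span_singleton_of_forall_intValuation_le {a r : R} (hr : r ≠ 0)
    (h : ∀ v : HeightOneSpectrum R, v.intValuation a ≤ v.intValuation r) :
    a ∈ Ideal.span {r} := by
  obtain ⟨b, hb⟩ := mem_integers_of_valuation_le_one (FractionRing R)
    (algebraMap R _ a / algebraMap R _ r) fun v => by
      rw [map_div₀, valuation_of_algebraMap, valuation_of_algebraMap]
      exact div_le_one_of_le₀ (h v) zero_le
  rw [Ideal.mem_span_singleton']
  refine ⟨b, IsFractionRing.injective R (FractionRing R) ?_⟩
  rw [map_mul, hb, div_mul_cancel₀ _ (by simpa using hr)]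

variable {K : Type*} [Field K] [Algebra R K] [IsFractionRing R K] (v : HeightOneSpectrum R)

theorem valued_algebraMap_adicCompletion (r : R) :
    Valued.v (algebraMap R (v.adicCompletion K) r) = v.intValuation r := by
  rw [valuedAdicCompletion_eq_valuation, valuation_of_algebraMap]

theorem exists_setOf_valued_le_subset {U : Set (v.adicCompletion K)} (hU : U ∈ 𝓝 0) :
    ∃ r : R, r ≠ 0 ∧ {x | Valued.v x ≤ v.intValuation r} ⊆ U := by
  obtain ⟨γ, hγ⟩ := Valued.mem_nhds_zero.mp hU
  obtain ⟨n, hn⟩ := WithZero.exists_exp_neg_natCast_lt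
    (MonoidWithZeroHom.ValueGroup₀.embedding_unit_ne_zero γ)
  obtain ⟨π, hπ⟩ := v.intValuation_exists_uniformizer
  have hπ0 : π ≠ 0 := by
    rintro rfl
    exact WithZero.exp_ne_zero (hπ.symm.trans (map_zero _))
  refine ⟨π ^ n, pow_ne_zero _ hπ0, fun x hx => hγ ?_⟩
  rw [Set.mem_ofPred_eq, Valuation.restrict_lt_iff_lt_embedding]
  refine lt_of_le_of_lt (hx.trans_eq ?_) hn
  rw [map_pow, hπ, ← WithZero.exp_nsmul]
  simp

theorem exists_valued_sub_le {y : v.adicCompletion K} (hy : Valued.v y ≤ 1) {r : R} (hr : r ≠ 0) :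
    ∃ a : R, Valued.v (y - algebraMap R _ a) ≤ v.intValuation r := by
  have hr0 : algebraMap R (v.adicCompletion K) r ≠ 0 := by
    rw [← (Valued.v).ne_zero_iff, valued_algebraMap_adicCompletion]
    exact v.intValuation_ne_zero r hr
  have hball : {z | Valued.v (z - y) ≤ v.intValuation r} ∈ 𝓝 y := by
    rw [← v.valued_algebraMap_adicCompletion (K := K)]
    refine ((Valued.isOpen_setOf_v_le hr0).preimage (continuous_sub_right y)).mem_nhds ?_
    simp
  obtain ⟨_, hk, k, rfl⟩ := mem_closure_iff_nhds.mp (denseRange_algebraMap K v y) _ hball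
  replace hk : Valued.v (algebraMap K _ k - y) ≤ v.intValuation r := hk
  have hk1 : v.valuation K k ≤ 1 := by
    rw [← valuedAdicCompletion_eq_valuation', ← sub_add_cancel (k : v.adicCompletion K) y]
    exact (Valuation.map_add _ _ _).trans (max_le (hk.trans (v.intValuation_le_one r)) hy)
  obtain ⟨a, ha⟩ := exists_valuation_sub_lt_of_integer v hk1
    (Units.mk0 (v.intValuation r) (v.intValuation_ne_zero r hr))
  refine ⟨a, ?_⟩
  rw [← sub_add_sub_cancel' (algebraMap K _ k)]
  refine (Valuation.map_add _ _ _).trans (max_le ?_ ((Valuation.map_sub_swap _ _ _).trans_le hk))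
  rw [IsScalarTower.algebraMap_apply R K, ← map_sub]
  exact (valuedAdicCompletion_eq_valuation' v _).trans_le
    ((Valuation.map_sub_swap _ _ _).trans_lt ha).le

end IsDedekindDomain.HeightOneSpectrum

namespace IsDedekindDomain.FiniteAdeleRing

variable {R : Type*} [CommRing R] [IsDedekindDomain R] {K : Type*} [Field K] [Algebra R K]
  [IsFractionRing R K] {S : Type*} [CommRing S] [IsDedekindDomain S] {L : Type*} [Field L]
  [Algebra S L] [IsFractionRing S L]

variable (R K) in
def integralAdeles : Subalgebra R (FiniteAdeleRing R K) where
  carrier := {x | ∀ v, x v ∈ v.adicCompletionIntegers K}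
  mul_mem' hx hy v := mul_mem (hx v) (hy v)
  add_mem' hx hy v := add_mem (hx v) (hy v)
  algebraMap_mem' r := fun v => coe_mem_adicCompletionIntegers v r

theorem mem_integralAdeles {x : FiniteAdeleRing R K} :
    x ∈ integralAdeles R K ↔ ∀ v, Valued.v (x v) ≤ 1 :=
  forall_congr' fun v => mem_adicCompletionIntegers R K v

theorem isOpen_integralAdeles : IsOpen (integralAdeles R K : Set (FiniteAdeleRing R K)) :=
  RestrictedProduct.isOpen_forall_mem fun _ => Valued.isOpen_valuationSubring _

theorem valued_algebraMap_apply (r : R) (v : HeightOneSpectrum R) :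
    Valued.v (algebraMap R (FiniteAdeleRing R K) r v) = v.intValuation r :=
  v.valued_algebraMap_adicCompletion r

theorem inv_mul_mem_integralAdeles_iff {r : R} (hr : r ≠ 0) {x : FiniteAdeleRing R K} :
    algebraMap K _ (algebraMap R K r)⁻¹ * x ∈ integralAdeles R K ↔
      ∀ v, Valued.v (x v) ≤ v.intValuation r := by
  refine forall_congr' fun v => ?_
  have hr' : 0 < v.intValuation r := zero_lt_iff.mpr (v.intValuation_ne_zero r hr)
  change algebraMap K (FiniteAdeleRing R K) _ v * x v ∈ _ ↔ _
  rw [mem_adicCompletionIntegers, map_mul, FiniteAdeleRing.algebraMap_apply,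
    valuedAdicCompletion_eq_valuation', map_inv₀, valuation_of_algebraMap, inv_mul_le_one₀ hr']

theorem isOpen_setOf_valued_le {r : R} (hr : r ≠ 0) :
    IsOpen {x : FiniteAdeleRing R K | ∀ v, Valued.v (x v) ≤ v.intValuation r} := by
  simp_rw [← inv_mul_mem_integralAdeles_iff hr]
  exact isOpen_integralAdeles.preimage (continuous_const_mul _)

theorem hasBasis_nhds_zero :
    (𝓝 (0 : FiniteAdeleRing R K)).HasBasis (fun r : R => r ≠ 0)
      fun r => {x | ∀ v, Valued.v (x v) ≤ v.intValuation r} := by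
  classical
  refine ⟨fun U => ⟨fun hU => ?_, fun ⟨r, hr, hrU⟩ => ?_⟩⟩
  · have hN : 𝓝 (0 : FiniteAdeleRing R K) = map (RestrictedProduct.structureMap
        (fun v : HeightOneSpectrum R => v.adicCompletion K)
        (fun v => (v.adicCompletionIntegers K : Set (v.adicCompletion K))) cofinite) (𝓝 0) :=
      RestrictedProduct.nhds_zero_eq_map_structureMap _ fun _ => Valued.isOpen_valuationSubring _
    have hU' : RestrictedProduct.structureMap _ _ cofinite ⁻¹' U ∈ 𝓝 0 := by
      rw [hN] at hU
      exact hU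
    rw [nhds_pi, mem_pi] at hU'
    obtain ⟨I, hI, u, hu, hIu⟩ := hU'
    have hball (v : HeightOneSpectrum R) : ∃ s : R, s ≠ 0 ∧
        ∀ y : v.adicCompletionIntegers K, Valued.v (y : v.adicCompletion K) ≤ v.intValuation s →
          y ∈ u v := by
      obtain ⟨W, hW, hWu⟩ := (mem_nhds_subtype _ _ _).mp (hu v)
      obtain ⟨s, hs, hsW⟩ := v.exists_setOf_valued_le_subset hW
      exact ⟨s, hs, fun y hy => hWu (hsW hy)⟩
    choose s hs0 hs using hball
    refine ⟨∏ v ∈ hI.toFinset, s v, Finset.prod_ne_zero_iff.mpr fun v _ => hs0 v,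
      fun x hx => ?_⟩
    have hxO (v : HeightOneSpectrum R) : x v ∈ v.adicCompletionIntegers K :=
      (mem_adicCompletionIntegers R K v).mpr ((hx v).trans (v.intValuation_le_one _))
    have hxI : (fun v : HeightOneSpectrum R => (⟨x v, hxO v⟩ : v.adicCompletionIntegers K)) ∈
        I.pi u := fun v hv =>
      hs v _ ((hx v).trans (v.intValuation_prod_le _ _ (hI.mem_toFinset.mpr hv)))
    exact hIu hxI
  · exact mem_of_superset ((isOpen_setOf_valued_le hr).mem_nhds fun v => by
      change Valued.v (0 : v.adicCompletion K) ≤ _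
      rw [map_zero]
      exact zero_le) hrU

theorem isPowerBounded_iff_mem_integralAdeles {x : FiniteAdeleRing R K} :
    IsPowerBounded x ↔ x ∈ integralAdeles R K := by
  have hpow (n : ℕ) (y : FiniteAdeleRing R K) (v : HeightOneSpectrum R) :
      Valued.v ((x ^ n * y) v) = Valued.v (x v) ^ n * Valued.v (y v) := by
    rw [← map_pow, ← map_mul]
    rfl
  rw [mem_integralAdeles]
  refine ⟨fun hx w => ?_, fun hx U hU => ?_⟩
  · obtain ⟨V, hV, hxV⟩ := hx _ (isOpen_integralAdeles.mem_nhds (zero_mem _))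
    obtain ⟨s, hs, hsV⟩ := hasBasis_nhds_zero.mem_iff.mp hV
    refine le_one_of_forall_pow_mul_le_one₀ (w.intValuation_ne_zero s hs) fun n => ?_
    have hsn := mem_integralAdeles.mp (hxV n _ (hsV fun v => (valued_algebraMap_apply s v).le)) w
    rwa [hpow, valued_algebraMap_apply] at hsn
  · obtain ⟨r, hr, hrU⟩ := hasBasis_nhds_zero.mem_iff.mp hU
    refine ⟨_, hasBasis_nhds_zero.mem_of_mem hr, fun n y hy => hrU fun v => ?_⟩
    rw [hpow]
    exact (mul_le_of_le_one_left' (pow_le_one' (hx v) n)).trans (hy v)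

theorem mem_span_algebraMap_iff {r : R} (hr : r ≠ 0) {x : integralAdeles R K} :
    x ∈ Ideal.span {algebraMap R (integralAdeles R K) r} ↔
      ∀ v, Valued.v ((x : FiniteAdeleRing R K) v) ≤ v.intValuation r := by
  rw [Ideal.mem_span_singleton']
  refine ⟨?_, fun hx => ?_⟩
  · rintro ⟨y, rfl⟩ v
    change Valued.v ((y : FiniteAdeleRing R K) v * algebraMap R (FiniteAdeleRing R K) r v) ≤ _
    rw [map_mul, valued_algebraMap_apply]
    exact mul_le_of_le_one_left' (mem_integralAdeles.mp y.2 v)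
  · refine ⟨⟨_, (inv_mul_mem_integralAdeles_iff hr).mpr hx⟩, Subtype.ext ?_⟩
    have hr' : algebraMap R K r ≠ 0 := (map_ne_zero_iff _ (IsFractionRing.injective R K)).mpr hr
    change algebraMap K _ (algebraMap R K r)⁻¹ * (x : FiniteAdeleRing R K) *
      algebraMap R (FiniteAdeleRing R K) r = x
    rw [IsScalarTower.algebraMap_apply R K (FiniteAdeleRing R K), mul_right_comm, ← map_mul,
      inv_mul_cancel₀ hr', map_one, one_mul]

theorem exists_sub_mem_span_algebraMap {r : R} (hr : r ≠ 0) (x : integralAdeles R K) :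
    ∃ a : R, x - algebraMap R _ a ∈ Ideal.span {algebraMap R (integralAdeles R K) r} := by
  have hfin : {v : HeightOneSpectrum R | v.intValuation r < 1}.Finite := by
    simp_rw [intValuation_lt_one_iff_dvd]
    exact Ideal.finite_factors (by simpa [Ideal.span_singleton_eq_bot] using hr)
  have hxv := mem_integralAdeles.mp x.2
  choose a ha using fun v : HeightOneSpectrum R => v.exists_valued_sub_le (hxv v) hr
  obtain ⟨b, hb⟩ := exists_forall_intValuation_sub_le hfin.toFinset a hr
  refine ⟨b, (mem_span_algebraMap_iff hr).mpr fun v => ?_⟩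
  change Valued.v ((x : FiniteAdeleRing R K) v - algebraMap R (v.adicCompletion K) b) ≤ _
  by_cases hv : v.intValuation r < 1
  · rw [← sub_add_sub_cancel _ (algebraMap R _ (a v)), ← map_sub]
    refine (Valuation.map_add _ _ _).trans (max_le (ha v) ?_)
    rw [valued_algebraMap_adicCompletion, Valuation.map_sub_swap]
    exact hb v (hfin.mem_toFinset.mpr hv)
  · rw [(v.intValuation_le_one r).antisymm (not_lt.mp hv)]
    exact (Valuation.map_sub _ _ _).trans
      (max_le (hxv v) ((v.valued_algebraMap_adicCompletion b).trans_le (v.intValuation_le_one b)))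

theorem card_quotient_span_algebraMap {r : R} (hr : r ≠ 0) :
    Nat.card (integralAdeles R K ⧸ Ideal.span {algebraMap R (integralAdeles R K) r}) =
      Nat.card (R ⧸ Ideal.span {r}) := by
  set f := (Ideal.Quotient.mk (Ideal.span {algebraMap R (integralAdeles R K) r})).comp
    (algebraMap R (integralAdeles R K))
  have hsurj : Function.Surjective f := by
    intro q
    obtain ⟨x, rfl⟩ := Ideal.Quotient.mk_surjective q
    obtain ⟨a, ha⟩ := exists_sub_mem_span_algebraMap hr x
    exact ⟨a, (Ideal.Quotient.eq.mpr ha).symm⟩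
  have hker : RingHom.ker f = Ideal.span {r} := by
    ext a
    rw [RingHom.mem_ker, RingHom.comp_apply, Ideal.Quotient.eq_zero_iff_mem]
    refine ⟨fun h => mem_span_singleton_of_forall_intValuation_le hr fun v => ?_, fun h => ?_⟩
    · simpa only [Subalgebra.coe_algebraMap, valued_algebraMap_apply]
        using (mem_span_algebraMap_iff hr).mp h v
    · obtain ⟨c, rfl⟩ := Ideal.mem_span_singleton'.mp h
      rw [map_mul]
      exact Ideal.mul_mem_left _ _ (Ideal.mem_span_singleton_self _)
  exact (Nat.card_congr ((Ideal.quotEquivOfEq hker).symm.trans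
    (RingHom.quotientKerEquivOfSurjective hsurj)).toEquiv).symm

noncomputable def integralAdelesEquiv (e : FiniteAdeleRing R K ≃+* FiniteAdeleRing S L)
    (he : Continuous e) (he' : Continuous e.symm) : integralAdeles R K ≃+* integralAdeles S L :=
  e.restrict _ _ fun x => by
    rw [← isPowerBounded_iff_mem_integralAdeles, ← isPowerBounded_iff_mem_integralAdeles,
      isPowerBounded_map_iff he he']

end IsDedekindDomain.FiniteAdeleRing

namespace NumberField

open IsDedekindDomain.FiniteAdeleRing

theorem card_integralAdeles_quotient_natCast (K : Type*) [Field K] [NumberField K] {n : ℕ}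
    (hn : n ≠ 0) :
    Nat.card (integralAdeles (𝓞 K) K ⧸ Ideal.span {(n : integralAdeles (𝓞 K) K)}) =
      n ^ Module.finrank ℚ K := by
  rw [← map_natCast (algebraMap (𝓞 K) _), card_quotient_span_algebraMap (Nat.cast_ne_zero.mpr hn),
    ← Submodule.cardQuot_apply, ← Ideal.absNorm_apply, Ideal.absNorm_span_natCast,
    RingOfIntegers.rank]

end NumberField

open IsDedekindDomain NumberField

theorem stmt_14 (K L : Type*) [Field K] [NumberField K] [Field L] [NumberField L]
    (j : FiniteAdeleRing (𝓞 L) L ≃+* FiniteAdeleRing (𝓞 K) K)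
    (hj : Continuous j) (hj' : Continuous j.symm) :
    Module.finrank ℚ K = Module.finrank ℚ L := by
  have h := Nat.card_congr (Ideal.quotientEquiv
    (Ideal.span {((2 : ℕ) : FiniteAdeleRing.integralAdeles (𝓞 L) L)})
    (Ideal.span {((2 : ℕ) : FiniteAdeleRing.integralAdeles (𝓞 K) K)})
    (FiniteAdeleRing.integralAdelesEquiv j hj hj')
    (by rw [Ideal.map_span, Set.image_singleton, map_natCast])).toEquiv
  rw [card_integralAdeles_quotient_natCast L two_ne_zero,
    card_integralAdeles_quotient_natCast K two_ne_zero] at h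
  exact (Nat.pow_right_injective le_rfl h).symm
end
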